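/- arXiv:2003.07192 — 2 statements merged into one kernel-verified Lean document; each statement's English description precedes it below -/
import Mathlib

section
/- (Feasibility) Let m* be any generalized Nash equilibrium of the game induced by the misinformation-filtering mechanism, and suppose (n_i·h̃_i* / Σ_{k∈I} n_k·h̃_k*)·α₀(m*) ≤ 1 for every i ∈ I. Then the allocations at m* form a feasible solution of the social welfare problem: 0 ≤ α_i(m*) ≤ 1 for every i ∈ J, α₀(m*) ≤ Σ_{i∈I} n_i·h_i(α_i(m*)), 0 ≤ τ₀(m*) ≤ b₀, and Σ_{i∈J} τ_i(m*) = 0. -/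
open Finset

noncomputable section

namespace MisinfoFilter

/-- A message of a social-media platform: the proposed minimum average trust `ht`,
the proposed prices `pP l` for the filters of the other competing platforms,
the proposed price `pG` for the government's lower bound, the proposed filters `a k`
for the competing platforms and the proposed lower bound `aG` for the government. -/
structure PlatformMsg (N : ℕ) where
  ht : ℝ
  pP : Fin N → ℝ
  pG : ℝ
  a : Fin N → ℝ
  aG : ℝ

/-- The government's message: a proposed price `pG` and a proposed lower bound `aG`. -/
structure GovMsg where
  pG : ℝ
  aG : ℝ

/-- A message profile: one message per platform and one for the government. -/
structure Profile (N : ℕ) where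
  pf : Fin N → PlatformMsg N
  gov : GovMsg

/-- Validity of a platform message: nonnegative proposed trust and prices. -/
def PlatformMsg.Valid {N : ℕ} (msg : PlatformMsg N) : Prop :=
  0 ≤ msg.ht ∧ (∀ l, 0 ≤ msg.pP l) ∧ 0 ≤ msg.pG

/-- Validity of a government message: nonnegative proposed price. -/
def GovMsg.Valid (g : GovMsg) : Prop := 0 ≤ g.pG

/-- Unilateral deviation of platform `i` to message `msg`. -/
def Profile.updPf {N : ℕ} (m : Profile N) (i : Fin N) (msg : PlatformMsg N) : Profile N :=
  ⟨Function.update m.pf i msg, m.gov⟩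

/-- Unilateral deviation of the government to message `g`. -/
def Profile.updGov {N : ℕ} (m : Profile N) (g : GovMsg) : Profile N :=
  ⟨m.pf, g⟩

/-- The data of the misinformation-filtering game: `N ≥ 1` platforms, competing sets
`C i ∋ i` with `|C i| ≥ 3` and symmetric competition, user fractions `n` (positive,
summing to one), average trust functions `h i`, valuations `v i` (each depending only on
the coordinates in `C i`), the government's valuation `v0` and budget `b0 ≥ 0`. -/
structure Framework (N : ℕ) where
  hN : 1 ≤ N
  C : Fin N → Finset (Fin N)
  mem_C : ∀ i, i ∈ C i
  card_C : ∀ i, 3 ≤ (C i).card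
  symm_C : ∀ i k, i ∈ C k ↔ k ∈ C i
  n : Fin N → ℝ
  n_pos : ∀ i, 0 < n i
  n_sum : ∑ i, n i = 1
  h : Fin N → ℝ → ℝ
  v : Fin N → (Fin N → ℝ) → ℝ
  v_localized : ∀ i p q, (∀ k ∈ C i, p k = q k) → v i p = v i q
  v0 : ℝ → ℝ
  b0 : ℝ
  b0_nonneg : 0 ≤ b0

namespace Framework

variable {N : ℕ}

/-- Allocated filter `α_i(m)`: the average of proposals for `i` by the platforms in `C i`. -/
def alpha (F : Framework N) (m : Profile N) (i : Fin N) : ℝ :=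
  (∑ k ∈ F.C i, (m.pf k).a i) / ((F.C i).card : ℝ)

/-- Allocated lower bound `α₀(m)`: the average of all proposed lower bounds. -/
def alpha0 (F : Framework N) (m : Profile N) : ℝ :=
  (m.gov.aG + ∑ k, (m.pf k).aG) / ((N : ℝ) + 1)

/-- `Σ_k n_k · h̃_k`. -/
def trustSum (F : Framework N) (m : Profile N) : ℝ := ∑ k, F.n k * (m.pf k).ht

/-- Allocated minimum average trust `η_i(m)`. -/
def eta (F : Framework N) (m : Profile N) (i : Fin N) : ℝ :=
  min ((F.n i * (m.pf i).ht / F.trustSum m) * F.alpha0 m) 1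

/-- Allocated price `π_target^payer` paid by `payer` per unit of the filter of `target`:
the average of the prices proposed for `target` by the platforms in `C target`
other than `target` and `payer`. -/
def price (F : Framework N) (m : Profile N) (payer target : Fin N) : ℝ :=
  (∑ k ∈ ((F.C target).erase target).erase payer, (m.pf k).pP target) /
    (((F.C target).card : ℝ) - 2)

/-- Allocated government price `π₀`. -/
def price0 (F : Framework N) (m : Profile N) : ℝ := (∑ i, (m.pf i).pG) / (N : ℝ)

/-- Average proposal `ã_l^{-i}` for platform `l` by the platforms in `C l` other than `i`. -/
def aAvgMinus (F : Framework N) (m : Profile N) (i l : Fin N) : ℝ :=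
  (∑ k ∈ (F.C l).erase i, (m.pf k).a l) / (((F.C l).card : ℝ) - 1)

/-- Average proposal `ã₀^{-i}` of lower bounds by all players except platform `i`. -/
def aGAvgMinus (F : Framework N) (m : Profile N) (i : Fin N) : ℝ :=
  (m.gov.aG + ∑ k, (m.pf k).aG - (m.pf i).aG) / (N : ℝ)

/-- Tax `τ_i(m)` of platform `i`. -/
def tax (F : Framework N) (m : Profile N) (i : Fin N) : ℝ :=
  - m.gov.pG * F.eta m i
  - (∑ l ∈ (F.C i).erase i, F.price m l i) * F.alpha m i
  + ∑ l ∈ (F.C i).erase i, F.price m i l * F.alpha m l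
  + (∑ l ∈ (F.C i).erase i, (m.pf i).pP l * ((m.pf i).a l - F.aAvgMinus m i l) ^ 2)
  + (m.pf i).pG * ((m.pf i).aG - F.aGAvgMinus m i) ^ 2

/-- Tax (investment) `τ₀(m)` of the government. -/
def tax0 (F : Framework N) (m : Profile N) : ℝ :=
  F.price0 m * F.alpha0 m + (m.gov.pG - F.price0 m) ^ 2

/-- Utility of platform `i`. -/
def util (F : Framework N) (m : Profile N) (i : Fin N) : ℝ :=
  F.v i (F.alpha m) - F.tax m i

/-- Utility of the government. -/
def util0 (F : Framework N) (m : Profile N) : ℝ := F.v0 (F.alpha0 m) - F.tax0 m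

/-- An admissible message profile: all messages valid and `Σ_k n_k h̃_k > 0`
(profiles with `Σ_k n_k h̃_k = 0` are excluded by the social planner). -/
def ProfileValid (F : Framework N) (m : Profile N) : Prop :=
  (∀ i, (m.pf i).Valid) ∧ m.gov.Valid ∧ 0 < F.trustSum m

/-- Generalized Nash equilibrium of the induced game: the profile is admissible, every
player's own allocation is feasible, no platform can profit by a unilateral deviation whose
allocated filter stays in its feasible set `S_i`, and the government cannot profit by a
unilateral deviation satisfying its feasibility and budget constraints. -/
def IsGNE (F : Framework N) (m : Profile N) : Prop :=
  F.ProfileValid m ∧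
  (∀ i, F.alpha m i ∈ Set.Icc (0:ℝ) 1 ∧ F.eta m i ≤ F.n i * F.h i (F.alpha m i)) ∧
  F.alpha0 m ∈ Set.Icc (0:ℝ) 1 ∧ F.price0 m * F.alpha0 m ≤ F.b0 ∧
  (∀ (i : Fin N) (msg : PlatformMsg N), msg.Valid →
    0 < F.trustSum (m.updPf i msg) →
    F.alpha (m.updPf i msg) i ∈ Set.Icc (0:ℝ) 1 →
    F.eta (m.updPf i msg) i ≤ F.n i * F.h i (F.alpha (m.updPf i msg) i) →
    F.util (m.updPf i msg) i ≤ F.util m i) ∧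
  (∀ g : GovMsg, g.Valid →
    F.alpha0 (m.updGov g) ∈ Set.Icc (0:ℝ) 1 →
    F.price0 (m.updGov g) * F.alpha0 (m.updGov g) ≤ F.b0 →
    F.util0 (m.updGov g) ≤ F.util0 m)

end Framework

/-- The standing regularity assumptions of the model: each `h i` maps `[0,1]` into `[0,1]`
and is strictly increasing, concave and differentiable; each valuation `v i` is nonnegative,
concave and differentiable on the box, decreasing in the own coordinate and strictly
increasing in the coordinates of the other competing platforms; the government's valuation
`v0` is nonnegative, increasing, concave and differentiable on `[0,1]`. -/
structure Framework.Regular {N : ℕ} (F : Framework N) : Prop where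
  h_maps : ∀ i, Set.MapsTo (F.h i) (Set.Icc 0 1) (Set.Icc 0 1)
  h_strictMono : ∀ i, StrictMonoOn (F.h i) (Set.Icc 0 1)
  h_concave : ∀ i, ConcaveOn ℝ (Set.Icc 0 1) (F.h i)
  h_diff : ∀ i, DifferentiableOn ℝ (F.h i) (Set.Icc 0 1)
  v_nonneg : ∀ i p, (∀ k, p k ∈ Set.Icc (0:ℝ) 1) → 0 ≤ F.v i p
  v_concave : ∀ i, ConcaveOn ℝ {p : Fin N → ℝ | ∀ k, p k ∈ Set.Icc (0:ℝ) 1} (F.v i)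
  v_diff : ∀ i, DifferentiableOn ℝ (F.v i) {p : Fin N → ℝ | ∀ k, p k ∈ Set.Icc (0:ℝ) 1}
  v_own_anti : ∀ i p, (∀ k, p k ∈ Set.Icc (0:ℝ) 1) →
    ∀ x y : ℝ, x ∈ Set.Icc (0:ℝ) 1 → y ∈ Set.Icc (0:ℝ) 1 → x ≤ y →
      F.v i (Function.update p i y) ≤ F.v i (Function.update p i x)
  v_other_strictMono : ∀ i l, l ∈ F.C i → l ≠ i →
    ∀ p, (∀ k, p k ∈ Set.Icc (0:ℝ) 1) →
    ∀ x y : ℝ, x ∈ Set.Icc (0:ℝ) 1 → y ∈ Set.Icc (0:ℝ) 1 → x < y →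
      F.v i (Function.update p l x) < F.v i (Function.update p l y)
  v0_nonneg : ∀ x ∈ Set.Icc (0:ℝ) 1, 0 ≤ F.v0 x
  v0_mono : MonotoneOn F.v0 (Set.Icc 0 1)
  v0_concave : ConcaveOn ℝ (Set.Icc 0 1) F.v0
  v0_diff : DifferentiableOn ℝ F.v0 (Set.Icc 0 1)

end MisinfoFilter

end

/-!
At a GNE each player's own prices enter only its penalty terms, so a platform can drop them to
zero without changing any allocation; hence all penalties vanish, and likewise the government's
proposed price equals the allocated price `π₀`, so that `τ₀ = π₀ α₀`. When the minimum defining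
`η_i` is slack, the `η_i` add up to `α₀`, and the subsidies `p̃₀ η_i` paid to the platforms add up
to `p̃₀ α₀ = τ₀`. The remaining payments between competing platforms cancel pairwise by the
symmetry of competition, so the taxes balance.
-/

lemma Finset.sum_sum_erase_comm {ι M : Type*} [Fintype ι] [DecidableEq ι] [AddCommMonoid M]
    {C : ι → Finset ι} (hC : ∀ i k, i ∈ C k ↔ k ∈ C i) (f : ι → ι → M) :
    ∑ i, ∑ l ∈ (C i).erase i, f i l = ∑ l, ∑ i ∈ (C l).erase l, f i l := by
  refine sum_comm' fun i l => ?_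
  simp only [mem_univ, true_and, and_true, mem_erase, hC l i, ne_comm]

namespace MisinfoFilter

variable {N : ℕ}

def PlatformMsg.withoutPrices (msg : PlatformMsg N) : PlatformMsg N :=
  { msg with pP := 0, pG := 0 }

lemma PlatformMsg.Valid.withoutPrices {msg : PlatformMsg N} (h : msg.Valid) :
    msg.withoutPrices.Valid :=
  ⟨h.1, fun _ => le_rfl, le_rfl⟩

lemma Profile.updPf_pf_of_ne (m : Profile N) {i k : Fin N} (msg : PlatformMsg N) (hk : k ≠ i) :
    (m.updPf i msg).pf k = m.pf k :=
  Function.update_of_ne hk _ _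

lemma Profile.updPf_pf_comp {α : Type*} (m : Profile N) (i : Fin N) {msg : PlatformMsg N}
    {f : PlatformMsg N → α} (h : f msg = f (m.pf i)) (k : Fin N) :
    f ((m.updPf i msg).pf k) = f (m.pf k) := by
  by_cases hk : k = i
  · subst hk
    simpa [Profile.updPf] using h
  · rw [m.updPf_pf_of_ne msg hk]

namespace Framework

variable {F : Framework N} {m m' : Profile N}

noncomputable def transfer (F : Framework N) (m : Profile N) (i : Fin N) : ℝ :=
  - m.gov.pG * F.eta m i
  - (∑ l ∈ (F.C i).erase i, F.price m l i) * F.alpha m i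
  + ∑ l ∈ (F.C i).erase i, F.price m i l * F.alpha m l

noncomputable def penalty (F : Framework N) (m : Profile N) (i : Fin N) : ℝ :=
  (∑ l ∈ (F.C i).erase i, (m.pf i).pP l * ((m.pf i).a l - F.aAvgMinus m i l) ^ 2)
  + (m.pf i).pG * ((m.pf i).aG - F.aGAvgMinus m i) ^ 2

lemma tax_eq_transfer_add_penalty (F : Framework N) (m : Profile N) (i : Fin N) :
    F.tax m i = F.transfer m i + F.penalty m i := by
  unfold tax transfer penalty
  ring

lemma penalty_nonneg {i : Fin N} (hi : (m.pf i).Valid) : 0 ≤ F.penalty m i :=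
  add_nonneg (sum_nonneg fun l _ => mul_nonneg (hi.2.1 l) (sq_nonneg _))
    (mul_nonneg hi.2.2 (sq_nonneg _))

lemma penalty_withoutPrices (F : Framework N) (m : Profile N) (i : Fin N) :
    F.penalty (m.updPf i (m.pf i).withoutPrices) i = 0 := by
  simp [penalty, Profile.updPf, PlatformMsg.withoutPrices]

lemma alpha_congr (h : ∀ k, (m'.pf k).a = (m.pf k).a) : F.alpha m' = F.alpha m := by
  funext j
  simp only [alpha, h]

lemma alpha0_congr (hg : m'.gov.aG = m.gov.aG) (h : ∀ k, (m'.pf k).aG = (m.pf k).aG) :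
    F.alpha0 m' = F.alpha0 m := by
  simp only [alpha0, hg, h]

lemma trustSum_congr (h : ∀ k, (m'.pf k).ht = (m.pf k).ht) : F.trustSum m' = F.trustSum m := by
  simp only [trustSum, h]

lemma price_congr {payer target : Fin N}
    (h : ∀ k, k ≠ payer → k ≠ target → (m'.pf k).pP = (m.pf k).pP) :
    F.price m' payer target = F.price m payer target := by
  unfold price
  congr 1
  refine sum_congr rfl fun k hk => ?_
  rw [h k (ne_of_mem_erase hk) (ne_of_mem_erase (mem_of_mem_erase hk))]

lemma transfer_congr {i : Fin N} (hg : m'.gov = m.gov) (ha : ∀ k, (m'.pf k).a = (m.pf k).a)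
    (haG : ∀ k, (m'.pf k).aG = (m.pf k).aG) (hht : ∀ k, (m'.pf k).ht = (m.pf k).ht)
    (hpP : ∀ k ≠ i, (m'.pf k).pP = (m.pf k).pP) : F.transfer m' i = F.transfer m i := by
  have hpaid : ∀ l, F.price m' l i = F.price m l i := fun _ =>
    price_congr fun k _ hki => hpP k hki
  have hpaying : ∀ l, F.price m' i l = F.price m i l := fun _ =>
    price_congr fun k hki _ => hpP k hki
  simp only [transfer, eta, hg, alpha_congr (F := F) ha,
    alpha0_congr (F := F) (congrArg GovMsg.aG hg) haG, trustSum_congr (F := F) hht, hht,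
    hpaid, hpaying]

lemma price0_nonneg (h : ∀ i, (m.pf i).Valid) : 0 ≤ F.price0 m :=
  div_nonneg (sum_nonneg fun i _ => (h i).2.2) (Nat.cast_nonneg N)

lemma tax0_eq_of_gov_pG_eq (h : m.gov.pG = F.price0 m) :
    F.tax0 m = F.price0 m * F.alpha0 m := by
  rw [tax0, h, sub_self, sq, mul_zero, add_zero]

lemma sum_eta_eq_alpha0 (hT : F.trustSum m ≠ 0)
    (hmin : ∀ i, (F.n i * (m.pf i).ht / F.trustSum m) * F.alpha0 m ≤ 1) :
    ∑ i, F.eta m i = F.alpha0 m := by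
  simp only [eta, min_eq_left (hmin _)]
  rw [← sum_mul, ← sum_div, ← trustSum, div_self hT, one_mul]

lemma sum_transfer (hT : F.trustSum m ≠ 0)
    (hmin : ∀ i, (F.n i * (m.pf i).ht / F.trustSum m) * F.alpha0 m ≤ 1) :
    ∑ i, F.transfer m i = - m.gov.pG * F.alpha0 m := by
  have hpayments : ∑ i, ∑ l ∈ (F.C i).erase i, F.price m i l * F.alpha m l
      = ∑ i, (∑ l ∈ (F.C i).erase i, F.price m l i) * F.alpha m i := by
    simp only [sum_mul]
    exact sum_sum_erase_comm F.symm_C _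
  simp only [transfer]
  rw [sum_add_distrib, sum_sub_distrib, ← mul_sum, sum_eta_eq_alpha0 hT hmin, hpayments]
  ring

lemma IsGNE.gov_pG_eq_price0 (hm : F.IsGNE m) : m.gov.pG = F.price0 m := by
  obtain ⟨⟨hvalid, -, -⟩, -, hα0, hbud, -, hdevG⟩ := hm
  have hdev := hdevG ⟨F.price0 m, m.gov.aG⟩ (price0_nonneg (F := F) hvalid) hα0 hbud
  change F.v0 (F.alpha0 m) - (F.price0 m * F.alpha0 m + (F.price0 m - F.price0 m) ^ 2)
    ≤ F.v0 (F.alpha0 m) - (F.price0 m * F.alpha0 m + (m.gov.pG - F.price0 m) ^ 2) at hdev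
  have hsq : (m.gov.pG - F.price0 m) ^ 2 = 0 :=
    le_antisymm (by nlinarith) (sq_nonneg _)
  exact sub_eq_zero.mp (pow_eq_zero_iff two_ne_zero |>.mp hsq)

lemma IsGNE.penalty_eq_zero (hm : F.IsGNE m) (i : Fin N) : F.penalty m i = 0 := by
  obtain ⟨⟨hvalid, -, hT⟩, hfeas, -, -, hdevP, -⟩ := hm
  set m' := m.updPf i (m.pf i).withoutPrices
  have ha : ∀ k, (m'.pf k).a = (m.pf k).a := m.updPf_pf_comp i (f := PlatformMsg.a) rfl
  have haG : ∀ k, (m'.pf k).aG = (m.pf k).aG := m.updPf_pf_comp i (f := PlatformMsg.aG) rfl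
  have hht : ∀ k, (m'.pf k).ht = (m.pf k).ht := m.updPf_pf_comp i (f := PlatformMsg.ht) rfl
  have hα : F.alpha m' = F.alpha m := alpha_congr ha
  have hη : F.eta m' i = F.eta m i := by
    simp only [eta, trustSum_congr hht, alpha0_congr (F := F) (m := m) (m' := m') rfl haG, hht]
  have htransfer : F.transfer m' i = F.transfer m i :=
    transfer_congr rfl ha haG hht fun k hk => congrArg PlatformMsg.pP (m.updPf_pf_of_ne _ hk)
  have hdev : F.util m' i ≤ F.util m i :=
    hdevP i _ (hvalid i).withoutPrices (by rwa [trustSum_congr hht])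
      (by rw [hα]; exact (hfeas i).1) (by rw [hη, hα]; exact (hfeas i).2)
  have hpenalty : F.penalty m' i = 0 := F.penalty_withoutPrices m i
  simp only [util, tax_eq_transfer_add_penalty, hα, htransfer, hpenalty] at hdev
  linarith [penalty_nonneg (F := F) (hvalid i)]

end Framework

theorem feasibility_at_GNE_general {N : ℕ} (F : Framework N)
    (m : Profile N) (hm : F.IsGNE m)
    (hmin : ∀ i, (F.n i * (m.pf i).ht / F.trustSum m) * F.alpha0 m ≤ 1) :
    (∀ i, F.alpha m i ∈ Set.Icc (0:ℝ) 1) ∧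
    F.alpha0 m ∈ Set.Icc (0:ℝ) 1 ∧
    F.alpha0 m ≤ ∑ i, F.n i * F.h i (F.alpha m i) ∧
    0 ≤ F.tax0 m ∧ F.tax0 m ≤ F.b0 ∧
    F.tax0 m + ∑ i, F.tax m i = 0 := by
  have hgov := hm.gov_pG_eq_price0
  have hpenalty := hm.penalty_eq_zero
  obtain ⟨⟨hvalid, -, hT⟩, hfeas, hα0, hbud, -, -⟩ := hm
  have htax0 := Framework.tax0_eq_of_gov_pG_eq hgov
  have hsum_tax : ∑ i, F.tax m i = - m.gov.pG * F.alpha0 m := by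
    simp only [Framework.tax_eq_transfer_add_penalty, hpenalty, add_zero]
    exact Framework.sum_transfer hT.ne' hmin
  refine ⟨fun i => (hfeas i).1, hα0, ?_, ?_, ?_, ?_⟩
  · rw [← Framework.sum_eta_eq_alpha0 hT.ne' hmin]
    exact sum_le_sum fun i _ => (hfeas i).2
  · rw [htax0]
    exact mul_nonneg (Framework.price0_nonneg hvalid) hα0.1
  · rwa [htax0]
  · rw [htax0, hsum_tax, hgov]
    ring

/-- **Feasibility.** At any GNE `m` at which the minimum in the definition of
`η_i` is not binding, the allocations form a feasible solution of the social welfare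
problem: all allocated filters and the allocated lower bound lie in `[0,1]`, the lower
bound is at most the aggregate average trust, the government's investment lies in
`[0, b₀]`, and the taxes sum to zero. -/
theorem feasibility_at_GNE {N : ℕ} (F : Framework N) (hreg : F.Regular)
    (m : Profile N) (hm : F.IsGNE m)
    (hmin : ∀ i, (F.n i * (m.pf i).ht / F.trustSum m) * F.alpha0 m ≤ 1) :
    (∀ i, F.alpha m i ∈ Set.Icc (0:ℝ) 1) ∧
    F.alpha0 m ∈ Set.Icc (0:ℝ) 1 ∧
    F.alpha0 m ≤ ∑ i, F.n i * F.h i (F.alpha m i) ∧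
    0 ≤ F.tax0 m ∧ F.tax0 m ≤ F.b0 ∧
    F.tax0 m + ∑ i, F.tax m i = 0 :=
  feasibility_at_GNE_general F m hm hmin

end MisinfoFilter
end

section
/- (Individual rationality) Let m* be any generalized Nash equilibrium of the game induced by the misinformation-filtering mechanism. Then for every platform i ∈ I, the equilibrium utility is at least the utility of not participating: u_i(m*) ≥ v_i(a_k = 0 : k ∈ C_i), i.e., the GNE utility of platform i is at least its valuation when all competing filters (including its own) are zero. -/
/-!
A platform can always opt out: by proposing, for every filter `a_l` with `l ∈ C_i` and for the
government's lower bound, the negative of the sum of everybody else's proposals, it drives all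
these allocations to `0`, hence also `η_i = 0`, which keeps the deviation feasible. Proposing
zero prices as well makes its tax vanish, so the deviation yields exactly `v_i(0)`, and at a
GNE no feasible deviation beats the equilibrium utility.
-/

open Finset

namespace MisinfoFilter

theorem Profile.sum_updPf_pf {N : ℕ} {M : Type*} [AddCommMonoid M] (m : Profile N) (i : Fin N)
    (msg : PlatformMsg N) (g : Fin N → PlatformMsg N → M) {s : Finset (Fin N)} (hi : i ∈ s) :
    ∑ k ∈ s, g k ((m.updPf i msg).pf k) = g i msg + ∑ k ∈ s.erase i, g k (m.pf k) := by
  rw [← add_sum_erase s _ hi]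
  congr 1
  · simp [Profile.updPf]
  · exact sum_congr rfl fun k hk => by
      simp [Profile.updPf, Function.update_of_ne (ne_of_mem_erase hk)]

namespace Framework

variable {N : ℕ} (F : Framework N)

theorem trustSum_updPf (m : Profile N) (i : Fin N) (msg : PlatformMsg N) :
    F.trustSum (m.updPf i msg) = F.trustSum m + F.n i * (msg.ht - (m.pf i).ht) := by
  unfold trustSum
  rw [Profile.sum_updPf_pf m i msg (fun k p => F.n k * p.ht) (mem_univ i),
    ← add_sum_erase univ _ (mem_univ i)]
  ring

theorem eta_eq_zero_of_alpha0_eq_zero {m : Profile N} (h : F.alpha0 m = 0) (i : Fin N) :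
    F.eta m i = 0 := by
  simp [eta, h]

theorem tax_eq_zero {m : Profile N} {i : Fin N} (heta : F.eta m i = 0)
    (halpha : ∀ l ∈ F.C i, F.alpha m l = 0) (hpP : (m.pf i).pP = 0) (hpG : (m.pf i).pG = 0) :
    F.tax m i = 0 := by
  have hcross : ∑ l ∈ (F.C i).erase i, F.price m i l * F.alpha m l = 0 :=
    sum_eq_zero fun l hl => by rw [halpha l (mem_of_mem_erase hl), mul_zero]
  simp [tax, heta, halpha i (F.mem_C i), hcross, hpP, hpG]

def optOutMsg (m : Profile N) (i : Fin N) : PlatformMsg N where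
  ht := (m.pf i).ht
  pP := 0
  pG := 0
  a l := -∑ k ∈ (F.C l).erase i, (m.pf k).a l
  aG := -(m.gov.aG + ∑ k ∈ univ.erase i, (m.pf k).aG)

variable (m : Profile N) (i : Fin N)

theorem optOutMsg_valid (h : 0 ≤ (m.pf i).ht) : (F.optOutMsg m i).Valid :=
  ⟨h, fun _ => le_rfl, le_rfl⟩

theorem trustSum_updPf_optOutMsg : F.trustSum (m.updPf i (F.optOutMsg m i)) = F.trustSum m := by
  simp [trustSum_updPf, optOutMsg]

theorem alpha_updPf_optOutMsg {l : Fin N} (hl : i ∈ F.C l) :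
    F.alpha (m.updPf i (F.optOutMsg m i)) l = 0 := by
  unfold alpha
  rw [Profile.sum_updPf_pf m i _ (fun _ p => p.a l) hl]
  simp [optOutMsg]

theorem alpha0_updPf_optOutMsg : F.alpha0 (m.updPf i (F.optOutMsg m i)) = 0 := by
  unfold alpha0
  rw [Profile.sum_updPf_pf m i _ (fun _ p => p.aG) (mem_univ i)]
  simp only [Profile.updPf, optOutMsg]
  ring

theorem util_updPf_optOutMsg : F.util (m.updPf i (F.optOutMsg m i)) i = F.v i (fun _ => 0) := by
  have halpha : ∀ l ∈ F.C i, F.alpha (m.updPf i (F.optOutMsg m i)) l = 0 :=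
    fun l hl => F.alpha_updPf_optOutMsg m i ((F.symm_C i l).mpr hl)
  have htax : F.tax (m.updPf i (F.optOutMsg m i)) i = 0 :=
    F.tax_eq_zero (F.eta_eq_zero_of_alpha0_eq_zero (F.alpha0_updPf_optOutMsg m i) i) halpha
      (by simp [Profile.updPf, optOutMsg]) (by simp [Profile.updPf, optOutMsg])
  rw [util, htax, sub_zero]
  exact F.v_localized i _ _ halpha

end Framework

/-- **Individual rationality.** At any GNE `m` of the induced game, the
equilibrium utility of every platform `i` is at least its valuation when all the filters
of the competing platforms (including its own) are zero. -/
theorem individual_rationality {N : ℕ} (F : Framework N) (hreg : F.Regular)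
    (m : Profile N) (hm : F.IsGNE m) :
    ∀ i, F.v i (fun _ => 0) ≤ F.util m i := by
  obtain ⟨⟨hvalid, -, htrust⟩, -, -, -, hdev, -⟩ := hm
  intro i
  have hα : F.alpha (m.updPf i (F.optOutMsg m i)) i = 0 :=
    F.alpha_updPf_optOutMsg m i (F.mem_C i)
  rw [← F.util_updPf_optOutMsg m i]
  refine hdev i _ (F.optOutMsg_valid m i (hvalid i).1)
    (by rwa [F.trustSum_updPf_optOutMsg]) (by simp [hα]) ?_
  rw [hα, F.eta_eq_zero_of_alpha0_eq_zero (F.alpha0_updPf_optOutMsg m i)]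
  exact mul_nonneg (F.n_pos i).le (hreg.h_maps i ⟨le_rfl, zero_le_one⟩).1

end MisinfoFilter
end
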